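/- arXiv:1703.03945 — 2 statements merged into one kernel-verified Lean document; each statement's English description precedes it below -/
import Mathlib

section
/- Let a < b, κ a real constant, ρ : [a,b] → ℝ continuous, and define the beam action S(u) = ∫ₐᵇ ( κ u''(x)²/2 − ρ(x) u(x) ) dx. For u ∈ C⁴([a,b]) and v ∈ C²([a,b]), the first variation satisfies (d/dε)|_{ε=0} S(u + εv) = ∫ₐᵇ ( κ u''''(x) − ρ(x) ) v(x) dx + [ κ u''(x) v'(x) − κ u'''(x) v(x) ]ₐᵇ. -/
open Set

/-- `f` is of class `C²` on `s`, with successive derivatives `f1, f2`. -/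
def IsC2On (f f1 f2 : ℝ → ℝ) (s : Set ℝ) : Prop :=
  (∀ x ∈ s, HasDerivWithinAt f (f1 x) s x) ∧
  (∀ x ∈ s, HasDerivWithinAt f1 (f2 x) s x) ∧
  ContinuousOn f2 s

/-- `f` is of class `C⁴` on `s`, with successive derivatives `f1, f2, f3, f4`. -/
def IsC4On (f f1 f2 f3 f4 : ℝ → ℝ) (s : Set ℝ) : Prop :=
  (∀ x ∈ s, HasDerivWithinAt f (f1 x) s x) ∧
  (∀ x ∈ s, HasDerivWithinAt f1 (f2 x) s x) ∧
  (∀ x ∈ s, HasDerivWithinAt f2 (f3 x) s x) ∧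
  (∀ x ∈ s, HasDerivWithinAt f3 (f4 x) s x) ∧
  ContinuousOn f4 s

/-!
Expanding the square, `S(u + εv) = S(u) + ε S₁ + ε² S₂` is a quadratic polynomial in `ε`, so its
derivative at `0` is `S₁ = ∫ₐᵇ (κ u'' v'' − ρ v)`. Since
`(u'' v' − u''' v)' = u'' v'' − u'''' v`, the fundamental theorem of calculus moves the two
derivatives from `v` onto `u` at the price of the boundary term.
-/

open intervalIntegral
open MeasureTheory (volume)

section IntervalIntegral

variable {a b : ℝ} {f f' : ℝ → ℝ}

theorem integral_eq_sub_of_hasDerivWithinAt_Icc (hab : a ≤ b)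
    (hderiv : ∀ x ∈ Icc a b, HasDerivWithinAt f (f' x) (Icc a b) x)
    (hint : IntervalIntegrable f' volume a b) :
    ∫ x in a..b, f' x = f b - f a :=
  integral_eq_sub_of_hasDerivAt_of_le hab
    (fun x hx => (hderiv x hx).continuousWithinAt)
    (fun x hx => (hderiv x (Ioo_subset_Icc_self hx)).hasDerivAt (Icc_mem_nhds hx.1 hx.2)) hint

theorem hasDerivAt_quadratic_zero (c₀ c₁ c₂ : ℝ) :
    HasDerivAt (fun ε : ℝ => c₀ + ε * c₁ + ε ^ 2 * c₂) c₁ 0 := by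
  have hlin := (hasDerivAt_id (0 : ℝ)).mul_const c₁
  have hsq := (hasDerivAt_pow 2 (0 : ℝ)).mul_const c₂
  exact (((hasDerivAt_const (0 : ℝ) c₀).add hlin).add hsq).congr_deriv (by simp)

theorem hasDerivAt_integral_quadratic_zero {f₀ f₁ f₂ : ℝ → ℝ}
    (h₀ : IntervalIntegrable f₀ volume a b) (h₁ : IntervalIntegrable f₁ volume a b)
    (h₂ : IntervalIntegrable f₂ volume a b) :
    HasDerivAt (fun ε : ℝ => ∫ x in a..b, (f₀ x + ε * f₁ x + ε ^ 2 * f₂ x))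
      (∫ x in a..b, f₁ x) 0 := by
  have expand : ∀ ε : ℝ, ∫ x in a..b, (f₀ x + ε * f₁ x + ε ^ 2 * f₂ x)
      = (∫ x in a..b, f₀ x) + ε * (∫ x in a..b, f₁ x) + ε ^ 2 * ∫ x in a..b, f₂ x := by
    intro ε
    rw [integral_add (h₀.add (h₁.const_mul ε)) (h₂.const_mul _), integral_add h₀ (h₁.const_mul ε),
      integral_const_mul, integral_const_mul]
  simp only [expand]
  exact hasDerivAt_quadratic_zero _ _ _

end IntervalIntegral

section Smoothness

variable {s : Set ℝ} {f f1 f2 f3 f4 : ℝ → ℝ}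

theorem IsC2On.continuousOn (hf : IsC2On f f1 f2 s) : ContinuousOn f s :=
  fun x hx => (hf.1 x hx).continuousWithinAt

theorem IsC2On.continuousOn_deriv2 (hf : IsC2On f f1 f2 s) : ContinuousOn f2 s :=
  hf.2.2

theorem IsC4On.continuousOn (hf : IsC4On f f1 f2 f3 f4 s) : ContinuousOn f s :=
  fun x hx => (hf.1 x hx).continuousWithinAt

theorem IsC4On.isC2On_deriv2 (hf : IsC4On f f1 f2 f3 f4 s) : IsC2On f2 f3 f4 s :=
  ⟨hf.2.2.1, hf.2.2.2.1, hf.2.2.2.2⟩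

end Smoothness

theorem IsC2On.integral_mul_deriv2_sub_deriv2_mul {a b : ℝ} {f f1 f2 g g1 g2 : ℝ → ℝ}
    (hab : a ≤ b) (hf : IsC2On f f1 f2 (Icc a b)) (hg : IsC2On g g1 g2 (Icc a b)) :
    ∫ x in a..b, (f x * g2 x - f2 x * g x)
      = (f b * g1 b - f1 b * g b) - (f a * g1 a - f1 a * g a) := by
  refine integral_eq_sub_of_hasDerivWithinAt_Icc (f := fun x => f x * g1 x - f1 x * g x) hab
    (fun x hx => ?_) ?_
  · exact (((hf.1 x hx).mul (hg.2.1 x hx)).sub ((hf.2.1 x hx).mul (hg.1 x hx))).congr_deriv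
      (by ring)
  · exact ((hf.continuousOn.mul hg.continuousOn_deriv2).sub (hf.continuousOn_deriv2.mul hg.continuousOn)).intervalIntegrable_of_Icc
      hab

theorem integral_beam_first_order_eq {a b κ : ℝ} {ρ u2 u3 u4 v v1 v2 : ℝ → ℝ} (hab : a ≤ b)
    (hρ : ContinuousOn ρ (Icc a b)) (hu2 : IsC2On u2 u3 u4 (Icc a b))
    (hv : IsC2On v v1 v2 (Icc a b)) :
    ∫ x in a..b, (κ * u2 x * v2 x - ρ x * v x)
      = (∫ x in a..b, (κ * u4 x - ρ x) * v x)
        + ((κ * u2 b * v1 b - κ * u3 b * v b) - (κ * u2 a * v1 a - κ * u3 a * v a)) := by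
  have hbulk : IntervalIntegrable (fun x => κ * u4 x * v x - ρ x * v x) volume a b :=
    ((((hu2.continuousOn_deriv2.const_smul κ).mul hv.continuousOn).sub
      (hρ.mul hv.continuousOn))).intervalIntegrable_of_Icc hab
  have hgreen : IntervalIntegrable (fun x => u2 x * v2 x - u4 x * v x) volume a b :=
    ((hu2.continuousOn.mul hv.continuousOn_deriv2).sub
      (hu2.continuousOn_deriv2.mul hv.continuousOn)).intervalIntegrable_of_Icc hab
  calc ∫ x in a..b, (κ * u2 x * v2 x - ρ x * v x)
      = (∫ x in a..b, (κ * u4 x * v x - ρ x * v x))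
          + κ * ∫ x in a..b, (u2 x * v2 x - u4 x * v x) := by
        rw [← integral_const_mul, ← integral_add hbulk (hgreen.const_mul κ)]
        congr 1
        funext x
        ring
    _ = _ := by
        rw [hu2.integral_mul_deriv2_sub_deriv2_mul hab hv]
        simp only [sub_mul, mul_assoc]
        ring

/-- First variation of the Bernoulli beam action
`S(u) = ∫ₐᵇ (κ u''²/2 − ρ u) dx` at a `C⁴` function `u` in a `C²` direction `v`:
`(d/dε)|₀ S(u + εv) = ∫ₐᵇ (κ u'''' − ρ) v dx + [κ u'' v' − κ u''' v]ₐᵇ`. -/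
theorem beam_first_variation
    (a b κ : ℝ) (hab : a < b) (ρ : ℝ → ℝ) (hρ : ContinuousOn ρ (Icc a b))
    (u u1 u2 u3 u4 v v1 v2 : ℝ → ℝ)
    (hu : IsC4On u u1 u2 u3 u4 (Icc a b)) (hv : IsC2On v v1 v2 (Icc a b)) :
    HasDerivAt
      (fun ε : ℝ => ∫ x in a..b,
        (κ * (u2 x + ε * v2 x) ^ 2 / 2 - ρ x * (u x + ε * v x)))
      ((∫ x in a..b, (κ * u4 x - ρ x) * v x)
        + ((κ * u2 b * v1 b - κ * u3 b * v b)
            - (κ * u2 a * v1 a - κ * u3 a * v a))) 0 := by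
  have hu2 := hu.isC2On_deriv2
  rw [← integral_beam_first_order_eq hab.le hρ hu2 hv]
  have hS := hasDerivAt_integral_quadratic_zero (a := a) (b := b)
    (f₀ := fun x => κ * u2 x ^ 2 / 2 - ρ x * u x) (f₁ := fun x => κ * u2 x * v2 x - ρ x * v x)
    (f₂ := fun x => κ * v2 x ^ 2 / 2)
    ((((hu2.continuousOn.pow 2).const_smul κ).div_const 2).sub
      (hρ.mul hu.continuousOn) |>.intervalIntegrable_of_Icc hab.le)
    (((hu2.continuousOn.const_smul κ).mul hv.continuousOn_deriv2).sub
      (hρ.mul hv.continuousOn) |>.intervalIntegrable_of_Icc hab.le)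
    (((hv.continuousOn_deriv2.pow 2).const_smul κ).div_const 2 |>.intervalIntegrable_of_Icc hab.le)
  convert hS using 2 with ε
  congr 1
  funext x
  ring
end

section
/- Let a < b, κ ≠ 0 a real constant, ρ : [a,b] → ℝ continuous, and let u ∈ C⁴([a,b]) satisfy the Euler–Lagrange equation κ u''''(x) = ρ(x) on [a,b]. If moreover the first variation (d/dε)|_{ε=0} S(u + εv) of the beam action vanishes for every v ∈ C²([a,b]) (with no conditions at the endpoints), then u satisfies the four natural boundary conditions u''(a) = u''(b) = 0 and u'''(a) = u'''(b) = 0. -/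
open Set

/-- If `u` satisfies the Euler–Lagrange equation `κ u'''' = ρ` on `[a,b]` and the
first variation of the beam action `S(u) = ∫ₐᵇ (κ u''²/2 − ρ u) dx` vanishes for
every `C²` direction `v` (with no endpoint conditions), then `u` satisfies the four
natural boundary conditions `u''(a) = u''(b) = 0` and `u'''(a) = u'''(b) = 0`. -/
theorem beam_natural_boundary_conditions
    (a b κ : ℝ) (hab : a < b) (hκ : κ ≠ 0)
    (ρ : ℝ → ℝ) (hρ : ContinuousOn ρ (Icc a b))
    (u u1 u2 u3 u4 : ℝ → ℝ) (hu : IsC4On u u1 u2 u3 u4 (Icc a b))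
    (hEL : ∀ x ∈ Icc a b, κ * u4 x = ρ x)
    (hvar : ∀ v v1 v2 : ℝ → ℝ, IsC2On v v1 v2 (Icc a b) →
      HasDerivAt
        (fun ε : ℝ => ∫ x in a..b,
          (κ * (u2 x + ε * v2 x) ^ 2 / 2 - ρ x * (u x + ε * v x)))
        0 0) :
    u2 a = 0 ∧ u2 b = 0 ∧ u3 a = 0 ∧ u3 b = 0 := by
  obtain ⟨hu1, hu2, hu3, hu4, hu4c⟩ := hu
  have hI : uIcc a b = Icc a b := uIcc_of_le hab.le
  have hcu : ContinuousOn u (Icc a b) := fun x hx => (hu1 x hx).continuousWithinAt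
  have hcu2 : ContinuousOn u2 (Icc a b) := fun x hx => (hu3 x hx).continuousWithinAt
  have hcu3 : ContinuousOn u3 (Icc a b) := fun x hx => (hu4 x hx).continuousWithinAt
  have key : ∀ v v1 v2 : ℝ → ℝ, IsC2On v v1 v2 (Icc a b) →
      κ * (u2 b * v1 b - u3 b * v b) - κ * (u2 a * v1 a - u3 a * v a) = 0 := by
    intro v v1 v2 hv
    obtain ⟨hv1, hv2, hv2c⟩ := hv
    have hcv : ContinuousOn v (Icc a b) := fun x hx => (hv1 x hx).continuousWithinAt
    have hcv1 : ContinuousOn v1 (Icc a b) := fun x hx => (hv2 x hx).continuousWithinAt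
    have intA : IntervalIntegrable (fun x => κ * (u2 x) ^ 2 / 2 - ρ x * u x)
        MeasureTheory.volume a b := by
      apply ContinuousOn.intervalIntegrable; rw [hI]
      exact ((continuousOn_const.mul (hcu2.pow 2)).div_const 2).sub (hρ.mul hcu)
    have intB : IntervalIntegrable (fun x => κ * u2 x * v2 x - ρ x * v x)
        MeasureTheory.volume a b := by
      apply ContinuousOn.intervalIntegrable; rw [hI]
      exact ((continuousOn_const.mul hcu2).mul hv2c).sub (hρ.mul hcv)
    have intC : IntervalIntegrable (fun x => κ * (v2 x) ^ 2 / 2)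
        MeasureTheory.volume a b := by
      apply ContinuousOn.intervalIntegrable; rw [hI]
      exact (continuousOn_const.mul (hv2c.pow 2)).div_const 2
    set c0 : ℝ := ∫ x in a..b, (κ * (u2 x) ^ 2 / 2 - ρ x * u x) with hc0
    set c1 : ℝ := ∫ x in a..b, (κ * u2 x * v2 x - ρ x * v x) with hc1def
    set c2 : ℝ := ∫ x in a..b, (κ * (v2 x) ^ 2 / 2) with hc2
    have hg : ∀ ε : ℝ, (∫ x in a..b,
        (κ * (u2 x + ε * v2 x) ^ 2 / 2 - ρ x * (u x + ε * v x)))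
        = c0 + ε * c1 + ε ^ 2 * c2 := by
      intro ε
      have hpt : ∀ x : ℝ, κ * (u2 x + ε * v2 x) ^ 2 / 2 - ρ x * (u x + ε * v x)
          = (κ * (u2 x) ^ 2 / 2 - ρ x * u x) + ε * (κ * u2 x * v2 x - ρ x * v x)
            + ε ^ 2 * (κ * (v2 x) ^ 2 / 2) := fun x => by ring
      simp_rw [hpt]
      rw [intervalIntegral.integral_add (intA.add (intB.const_mul ε)) (intC.const_mul (ε ^ 2)),
        intervalIntegral.integral_add intA (intB.const_mul ε),
        intervalIntegral.integral_const_mul, intervalIntegral.integral_const_mul]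
    have hpoly : HasDerivAt (fun ε : ℝ => c0 + ε * c1 + ε ^ 2 * c2) c1 0 := by
      have h : HasDerivAt (fun ε : ℝ => c0 + ε * c1 + ε ^ 2 * c2)
          (0 + 1 * c1 + (↑2 * (0:ℝ) ^ (2 - 1)) * c2) 0 :=
        ((hasDerivAt_const (0:ℝ) c0).add ((hasDerivAt_id (0:ℝ)).mul_const c1)).add
          ((hasDerivAt_pow 2 (0:ℝ)).mul_const c2)
      simpa using h
    have hvar' := hvar v v1 v2 ⟨hv1, hv2, hv2c⟩
    rw [show (fun ε : ℝ => ∫ x in a..b,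
        (κ * (u2 x + ε * v2 x) ^ 2 / 2 - ρ x * (u x + ε * v x)))
        = fun ε : ℝ => c0 + ε * c1 + ε ^ 2 * c2 from funext hg] at hvar'
    have hc1 : c1 = 0 := (hpoly.unique hvar')
    -- integration by parts via FTC
    set w : ℝ → ℝ := fun x => κ * (u2 x * v1 x) - κ * (u3 x * v x) with hw_def
    set d : ℝ → ℝ := fun x =>
      κ * (u3 x * v1 x + u2 x * v2 x) - κ * (u4 x * v x + u3 x * v1 x) with hd_def
    have hw : ∀ x ∈ Icc a b, HasDerivWithinAt w (d x) (Icc a b) x := fun x hx =>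
      (((hu3 x hx).mul (hv2 x hx)).const_mul κ).sub
        (((hu4 x hx).mul (hv1 x hx)).const_mul κ)
    have hwc : ContinuousOn w (Icc a b) := fun x hx => (hw x hx).continuousWithinAt
    have hdc : ContinuousOn d (Icc a b) :=
      (continuousOn_const.mul ((hcu3.mul hcv1).add (hcu2.mul hv2c))).sub
        (continuousOn_const.mul ((hu4c.mul hcv).add (hcu3.mul hcv1)))
    have hdint : IntervalIntegrable d MeasureTheory.volume a b := by
      apply ContinuousOn.intervalIntegrable; rw [hI]; exact hdc
    have hderivIoo : ∀ x ∈ Ioo a b, HasDerivWithinAt w (d x) (Ioi x) x := fun x hx =>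
      (((hw x (Ioo_subset_Icc_self hx)).hasDerivAt
        (Icc_mem_nhds hx.1 hx.2)).hasDerivWithinAt)
    have hFTC : (∫ x in a..b, d x) = w b - w a :=
      intervalIntegral.integral_eq_sub_of_hasDeriv_right_of_le hab.le hwc hderivIoo hdint
    have hdeq : EqOn d (fun x => κ * u2 x * v2 x - ρ x * v x) (uIcc a b) := by
      intro x hx
      rw [hI] at hx
      have h := hEL x hx
      simp only [hd_def]
      linear_combination (-(v x)) * h
    have hwba : w b - w a = 0 := by
      rw [← hFTC, intervalIntegral.integral_congr hdeq, ← hc1def, hc1]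
    simp only [hw_def] at hwba
    linarith [hwba]
  -- apply to test functions 1, x, x², x³
  have E1 := key (fun _ => 1) (fun _ => 0) (fun _ => 0)
    ⟨fun x _ => (hasDerivAt_const x (1:ℝ)).hasDerivWithinAt,
     fun x _ => (hasDerivAt_const x (0:ℝ)).hasDerivWithinAt, continuousOn_const⟩
  have E2 := key (fun x => x) (fun _ => 1) (fun _ => 0)
    ⟨fun x _ => (hasDerivAt_id x).hasDerivWithinAt,
     fun x _ => (hasDerivAt_const x (1:ℝ)).hasDerivWithinAt, continuousOn_const⟩
  have E3 := key (fun x => x ^ 2) (fun x => 2 * x) (fun _ => 2)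
    ⟨fun x _ => by simpa using (hasDerivAt_pow 2 x).hasDerivWithinAt,
     fun x _ => by simpa using ((hasDerivAt_id x).const_mul (2:ℝ)).hasDerivWithinAt,
     continuousOn_const⟩
  have E4 := key (fun x => x ^ 3) (fun x => 3 * x ^ 2) (fun x => 6 * x)
    ⟨fun x _ => by simpa using (hasDerivAt_pow 3 x).hasDerivWithinAt,
     fun x _ => by
      have h := ((hasDerivAt_pow 2 x).const_mul (3:ℝ)).hasDerivWithinAt
        (s := Icc a b)
      simpa using h.congr_deriv (by ring),
     (continuous_const.mul continuous_id).continuousOn⟩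
  -- strip κ
  have f1 : u3 a - u3 b = 0 := by
    have h : κ * (u3 a - u3 b) = 0 := by linear_combination E1
    exact (mul_eq_zero.mp h).resolve_left hκ
  have f2 : u2 b - u2 a - b * u3 b + a * u3 a = 0 := by
    have h : κ * (u2 b - u2 a - b * u3 b + a * u3 a) = 0 := by linear_combination E2
    exact (mul_eq_zero.mp h).resolve_left hκ
  have f3 : 2 * b * u2 b - 2 * a * u2 a - b ^ 2 * u3 b + a ^ 2 * u3 a = 0 := by
    have h : κ * (2 * b * u2 b - 2 * a * u2 a - b ^ 2 * u3 b + a ^ 2 * u3 a) = 0 := by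
      linear_combination E3
    exact (mul_eq_zero.mp h).resolve_left hκ
  have f4 : 3 * b ^ 2 * u2 b - 3 * a ^ 2 * u2 a - b ^ 3 * u3 b + a ^ 3 * u3 a = 0 := by
    have h : κ * (3 * b ^ 2 * u2 b - 3 * a ^ 2 * u2 a - b ^ 3 * u3 b + a ^ 3 * u3 a) = 0 := by
      linear_combination E4
    exact (mul_eq_zero.mp h).resolve_left hκ
  have hba : b - a ≠ 0 := sub_ne_zero.mpr hab.ne'
  have hC : u3 a = 0 := by
    have h : (b - a) ^ 3 * u3 a = 0 := by
      linear_combination (b ^ 3 - 3 * a * b ^ 2) * f1 + (6 * a * b) * f2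
        + (-3 * (a + b)) * f3 + 2 * f4
    exact (mul_eq_zero.mp h).resolve_left (pow_ne_zero 3 hba)
  have hD : u3 b = 0 := by linarith
  have hB : u2 b = 0 := by
    have h : (2 * (b - a)) * u2 b = 0 := by
      linear_combination f3 - 2 * a * f2 + a ^ 2 * hC + (b ^ 2 - 2 * a * b) * hD
    exact (mul_eq_zero.mp h).resolve_left (by positivity)
  have hA : u2 a = 0 := by
    linear_combination (-1 : ℝ) * f2 + hB + a * hC + (-b) * hD
  exact ⟨hA, hB, hC, hD⟩
end
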